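/- Let G be a graph with a cluster partition (each cluster has a center, and every non-center cluster member is joined to its center by an edge of G). Let H contain all center edges, and additionally satisfy: for every edge (s,t) of G with s,t in distinct clusters, either (s,t) ∈ H, or H contains an edge from s to some vertex of the cluster of t, or H contains an edge from t to some vertex of the cluster of s. Then for every edge (s,t) ∈ E(G), dist_H(s,t) ≤ 3. -/
import Mathlib

private lemma adj_edist_le_one {V : Type*} {H : SimpleGraph V} {u v : V}
    (h : H.Adj u v) : H.edist u v ≤ 1 := by
  simpa using SimpleGraph.edist_le h.toWalk

private lemma edist_le_one' {V : Type*} {H : SimpleGraph V} {u v : V}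
    (h : u = v ∨ H.Adj u v) : H.edist u v ≤ 1 := by
  rcases h with rfl | h
  · simp [SimpleGraph.edist_self]
  · exact adj_edist_le_one h

/-- Per-edge 3-spanner property: with a cluster partition (centers idempotent, center
edges present in G and H), if every G-edge (s,t) between distinct clusters is either
in H, or H has an edge from s to the cluster of t, or from t to the cluster of s,
then every edge of G has H-distance at most 3 between its endpoints. -/
theorem stmt_17 {V : Type*} (G H : SimpleGraph V) (hHG : H ≤ G) (center : V → V)
    (hidem : ∀ v, center (center v) = center v)
    (hGcen : ∀ v, v ≠ center v → G.Adj v (center v))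
    (hHcen : ∀ v, v ≠ center v → H.Adj v (center v))
    (hedge : ∀ s t : V, G.Adj s t → center s ≠ center t →
      H.Adj s t ∨ (∃ w, center w = center t ∧ H.Adj s w) ∨
        (∃ w, center w = center s ∧ H.Adj t w)) :
    ∀ s t : V, G.Adj s t → H.edist s t ≤ 3 := by
  intro s t hst
  have hcen : ∀ v : V, H.edist v (center v) ≤ 1 := fun v =>
    edist_le_one' (by by_cases h : v = center v <;> [exact Or.inl h; exact Or.inr (hHcen v h)])
  have tri3 : ∀ a b c d : V, H.edist a b ≤ 1 → H.edist b c ≤ 1 → H.edist c d ≤ 1 →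
      H.edist a d ≤ 3 := by
    intro a b c d h1 h2 h3
    calc H.edist a d ≤ H.edist a b + H.edist b d := H.edist_triangle
      _ ≤ H.edist a b + (H.edist b c + H.edist c d) := by gcongr; exact H.edist_triangle
      _ ≤ 1 + (1 + 1) := by gcongr
      _ = 3 := by norm_num
  by_cases hcc : center s = center t
  · have h2 : H.edist (center s) t ≤ 1 := by
      rw [SimpleGraph.edist_comm, hcc]; exact hcen t
    calc H.edist s t ≤ H.edist s (center s) + H.edist (center s) t := H.edist_triangle
      _ ≤ 1 + 1 := by gcongr; exact hcen s
      _ ≤ 3 := by norm_num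
  · rcases hedge s t hst hcc with h | ⟨w, hw, hsw⟩ | ⟨w, hw, htw⟩
    · exact (adj_edist_le_one h).trans (by norm_num)
    · refine tri3 s w (center t) t (adj_edist_le_one hsw) ?_ ?_
      · rw [← hw]; exact hcen w
      · rw [SimpleGraph.edist_comm]; exact hcen t
    · rw [SimpleGraph.edist_comm]
      refine tri3 t w (center s) s (adj_edist_le_one htw) ?_ ?_
      · rw [← hw]; exact hcen w
      · rw [SimpleGraph.edist_comm]; exact hcen s
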